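/- arXiv:2102.11725 — 3 statements merged into one kernel-verified Lean document; each statement's English description precedes it below -/
import Mathlib

section
/- (Second approximation theorem) Let R be a Dedekind domain (not a field) with fraction field K. Let 𝔭₁, …, 𝔭ₖ be distinct nonzero prime ideals of R and let n₁, …, nₖ be integers. Then there exists x ∈ K such that v_{𝔭ᵢ}(x) = nᵢ for each i = 1, …, k, and v_𝔭(x) ≥ 0 for every nonzero prime ideal 𝔭 of R distinct from all the 𝔭ᵢ. -/
/-!
Shift all exponents by `c = max |nᵢ|`. By the Chinese remainder theorem there is `b ∈ R` with
`v_{𝔭ᵢ}(b) = c` for all `i`, and then `a ∈ R` with `v_{𝔭ᵢ}(a) = nᵢ + c` and `v_𝔮(a) ≥ v_𝔮(b)`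
at the finitely many other primes `𝔮` dividing `b`. Then `x = a / b` works.
-/

open IsDedekindDomain WithZero

namespace IsDedekindDomain.HeightOneSpectrum

variable {R : Type*} [CommRing R] [IsDedekindDomain R] (v : HeightOneSpectrum R)

theorem exists_intValuation_eq_exp (m : ℕ) : ∃ z : R, v.intValuation z = exp (-(m : ℤ)) := by
  obtain ⟨π, hπ⟩ := v.intValuation_exists_uniformizer
  exact ⟨π ^ m, by rw [map_pow, hπ, ← exp_nsmul, smul_neg, nsmul_one]⟩

theorem intValuation_eq_of_sub_mem_pow_succ {a z : R} {m : ℕ}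
    (hz : v.intValuation z = exp (-(m : ℤ))) (h : a - z ∈ v.asIdeal ^ (m + 1)) :
    v.intValuation a = exp (-(m : ℤ)) := by
  have hlt : v.intValuation (a - z) < v.intValuation z := by
    refine ((v.intValuation_le_pow_iff_mem _ _).2 h).trans_lt ?_
    rw [hz, exp_lt_exp]
    omega
  rw [← hz, ← sub_add_cancel a z, Valuation.map_add_eq_of_lt_right _ hlt]

theorem exists_intValuation_eq_and_le (s t : Finset (HeightOneSpectrum R))
    (e f : HeightOneSpectrum R → ℕ) :
    ∃ a : R, (∀ v ∈ s, v.intValuation a = exp (-(e v : ℤ))) ∧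
      ∀ v ∈ t, v ∉ s → v.intValuation a ≤ exp (-(f v : ℤ)) := by
  classical
  choose z hz using fun v : HeightOneSpectrum R => v.exists_intValuation_eq_exp (e v)
  obtain ⟨a, ha⟩ := exists_forall_sub_mem_ideal (s := s ∪ t) (fun v => v.asIdeal)
    (fun v => if v ∈ s then e v + 1 else f v) (fun v _ => v.prime)
    (fun _ _ _ _ hvw heq => hvw (HeightOneSpectrum.ext heq))
    (fun v => if v.1 ∈ s then z v else 0)
  refine ⟨a, fun v hv => ?_, fun v hv hvs => ?_⟩
  · have hsub := ha v (Finset.mem_union_left t hv)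
    simp only [if_pos hv] at hsub
    exact v.intValuation_eq_of_sub_mem_pow_succ (hz v) hsub
  · have hmem := ha v (Finset.mem_union_right s hv)
    simp only [if_neg hvs, sub_zero] at hmem
    exact (v.intValuation_le_pow_iff_mem a (f v)).2 hmem

theorem exists_intValuation_eq (s : Finset (HeightOneSpectrum R)) (e : HeightOneSpectrum R → ℕ) :
    ∃ a : R, ∀ v ∈ s, v.intValuation a = exp (-(e v : ℤ)) :=
  (exists_intValuation_eq_and_le s ∅ e e).imp fun _ h => h.1

theorem finite_setOf_intValuation_lt_one {b : R} (hb : b ≠ 0) :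
    {v : HeightOneSpectrum R | v.intValuation b < 1}.Finite := by
  simp_rw [intValuation_lt_one_iff_dvd]
  exact Ideal.finite_factors (by simpa [Ideal.span_singleton_eq_bot] using hb)

theorem exists_intValuation_eq_and_le_intValuation (s : Finset (HeightOneSpectrum R)) {b : R} (hb : b ≠ 0)
    (e : HeightOneSpectrum R → ℕ) :
    ∃ a : R, (∀ v ∈ s, v.intValuation a = exp (-(e v : ℤ))) ∧
      ∀ v ∉ s, v.intValuation a ≤ v.intValuation b := by
  obtain ⟨a, has, hat⟩ := exists_intValuation_eq_and_le s
    (finite_setOf_intValuation_lt_one hb).toFinset e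
    (fun v => multiplicity v.asIdeal (Ideal.span {b}))
  refine ⟨a, has, fun v hvs => ?_⟩
  by_cases hvb : v.intValuation b < 1
  · rw [v.intValuation_eq_exp_neg_multiplicity hb]
    exact hat v (by simpa using hvb) hvs
  · rw [(v.intValuation_le_one b).antisymm (not_lt.1 hvb)]
    exact v.intValuation_le_one a

variable (K : Type*) [Field K] [Algebra R K] [IsFractionRing R K]

theorem exists_valuation_eq_and_le_one (s : Finset (HeightOneSpectrum R))
    (n : HeightOneSpectrum R → ℤ) :
    ∃ x : K, (∀ v ∈ s, v.valuation K x = exp (-n v)) ∧ ∀ v ∉ s, v.valuation K x ≤ 1 := by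
  obtain rfl | ⟨v₀, hv₀⟩ := s.eq_empty_or_nonempty
  · exact ⟨1, by simp, fun v _ => (map_one _).le⟩
  set c : ℕ := s.sup fun v => (n v).natAbs
  have hc : ∀ v ∈ s, 0 ≤ n v + c := fun v hv => by
    have := Finset.le_sup (f := fun v => (n v).natAbs) hv
    omega
  obtain ⟨b, hb⟩ := exists_intValuation_eq s fun _ => c
  have hb0 : b ≠ 0 := fun h => exp_ne_zero (by rw [← hb v₀ hv₀, h, map_zero])
  obtain ⟨a, has, hat⟩ := exists_intValuation_eq_and_le_intValuation s hb0 fun v => (n v + c).toNat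
  refine ⟨algebraMap R K a / algebraMap R K b, fun v hv => ?_, fun v hv => ?_⟩
  · rw [map_div₀, valuation_of_algebraMap, valuation_of_algebraMap, has v hv, hb v hv,
      ← exp_sub, Int.toNat_of_nonneg (hc v hv)]
    congr 1
    ring
  · rw [map_div₀, valuation_of_algebraMap, valuation_of_algebraMap,
      div_le_one₀ (zero_lt_iff.2 (v.intValuation_ne_zero b hb0))]
    exact hat v hv

end IsDedekindDomain.HeightOneSpectrum

open IsDedekindDomain.HeightOneSpectrum in
theorem stmt14_general (R : Type*) [CommRing R] [IsDedekindDomain R]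
    (K : Type*) [Field K] [Algebra R K] [IsFractionRing R K]
    (k : ℕ) (p : Fin k → IsDedekindDomain.HeightOneSpectrum R)
    (hp : Function.Injective p) (n : Fin k → ℤ) :
    ∃ x : K,
      (∀ i : Fin k,
        (p i).valuation K x =
          ((Multiplicative.ofAdd (-(n i)) : Multiplicative ℤ) : WithZero (Multiplicative ℤ))) ∧
      (∀ q : IsDedekindDomain.HeightOneSpectrum R, (∀ i : Fin k, q ≠ p i) →
        q.valuation K x ≤ 1) := by
  classical
  obtain ⟨x, hS, hout⟩ := exists_valuation_eq_and_le_one K (Finset.univ.image p)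
    (Function.extend p n 0)
  refine ⟨x, fun i => ?_, fun q hq => hout q ?_⟩
  · rw [hS (p i) (Finset.mem_image_of_mem p (Finset.mem_univ i)), hp.extend_apply]
    rfl
  · simpa [eq_comm] using hq

/-- Second approximation theorem: given distinct nonzero primes 𝔭₁,…,𝔭ₖ of a Dedekind
domain R (not a field) with fraction field K and integers n₁,…,nₖ, there is an x ∈ K with
v_{𝔭ᵢ}(x) = nᵢ for each i, and v_𝔭(x) ≥ 0 for every other nonzero prime 𝔭.  (Here the
additive equality v(x) = n is expressed multiplicatively as v(x) = ofAdd (−n), and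
v(x) ≥ 0 as v(x) ≤ 1.) -/
theorem stmt14 (R : Type*) [CommRing R] [IsDomain R] [IsDedekindDomain R]
    (hnf : ¬IsField R)
    (K : Type*) [Field K] [Algebra R K] [IsFractionRing R K]
    (k : ℕ) (p : Fin k → IsDedekindDomain.HeightOneSpectrum R)
    (hp : Function.Injective p) (n : Fin k → ℤ) :
    ∃ x : K,
      (∀ i : Fin k,
        (p i).valuation K x =
          ((Multiplicative.ofAdd (-(n i)) : Multiplicative ℤ) : WithZero (Multiplicative ℤ))) ∧
      (∀ q : IsDedekindDomain.HeightOneSpectrum R, (∀ i : Fin k, q ≠ p i) →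
        q.valuation K x ≤ 1) :=
  stmt14_general R K k p hp n
end

section
/- Let R be an integral domain in which every nonzero proper ideal can be written as a product of prime ideals. Then R is a Dedekind domain. -/
/-!
By the inverse characterisation of Dedekind domains it suffices that every nonzero ideal is
invertible, and since nonzero ideals are products of nonzero primes, that every nonzero prime is.

Prime factorizations with invertible product are unique: a minimal factor on one side occurs on
the other and can be cancelled. If `P` is an invertible prime and `a ∉ P`, factor `P + (a)` and
`P + (a²)`; modulo `P` they become `(ā)` and `(ā)²`, so uniqueness in `R/P` and lifting back
give `P + (a²) = (P + (a))²`. As `P` is prime and `a ∉ P`, this forces `P ⊆ P (P + (a))`, and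
cancelling `P` yields `P + (a) = R`: invertible primes are maximal. Finally a nonzero prime `P`
contains some `(a) = p₁ ⋯ pₙ`; every `pᵢ` divides a principal ideal, so it is invertible, hence
maximal, and `P` is one of them.
-/

open Ideal FractionalIdeal
open scoped nonZeroDivisors

section

variable {R K : Type*} [CommRing R] [Field K] [Algebra R K]

namespace FractionalIdeal

theorem isUnit_coeIdeal_of_mul_left {I J : Ideal R}
    (h : IsUnit ((I * J : Ideal R) : FractionalIdeal R⁰ K)) : IsUnit (I : FractionalIdeal R⁰ K) :=
  isUnit_of_mul_isUnit_left (by rwa [← coeIdeal_mul])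

theorem isUnit_coeIdeal_multiset_prod {s : Multiset (Ideal R)}
    (hs : ∀ I ∈ s, IsUnit (I : FractionalIdeal R⁰ K)) : IsUnit (s.prod : FractionalIdeal R⁰ K) :=
  Multiset.prod_induction (fun I : Ideal R ↦ IsUnit (I : FractionalIdeal R⁰ K)) s
    (fun I J hI hJ ↦ by rw [coeIdeal_mul]; exact hI.mul hJ)
    (by rw [one_eq_top, coeIdeal_top]; exact isUnit_one) hs

theorem isUnit_coeIdeal_span_singleton [IsDomain R] [IsFractionRing R K] {c : R} (hc : c ≠ 0) :
    IsUnit (span {c} : FractionalIdeal R⁰ K) :=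
  (mul_inv_cancel_iff_isUnit K).mp (coe_ideal_span_singleton_mul_inv K hc)

theorem mul_left_cancel_of_isUnit_coeIdeal [IsFractionRing R K] {I J J' : Ideal R}
    (hI : IsUnit (I : FractionalIdeal R⁰ K)) (h : I * J = I * J') : J = J' :=
  coeIdeal_injective (K := K) (hI.mul_left_cancel (by rw [← coeIdeal_mul, ← coeIdeal_mul, h]))

end FractionalIdeal

theorem Ideal.exists_mem_of_multiset_prod_eq {s t : Multiset (Ideal R)}
    (hs : ∀ p ∈ s, p.IsPrime) (ht : ∀ p ∈ t, p.IsPrime) (h : s.prod = t.prod) (hs0 : s ≠ 0) :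
    ∃ p ∈ s, p ∈ t := by
  obtain ⟨p₀, hp₀⟩ := Multiset.exists_mem_of_ne_zero hs0
  obtain ⟨p, hp⟩ := s.toFinset.finite_toSet.exists_minimal ⟨p₀, Multiset.mem_toFinset.mpr hp₀⟩
  have hps : p ∈ s := Multiset.mem_toFinset.mp hp.prop
  obtain ⟨q, hqt, hqp⟩ := (hs p hps).multiset_prod_le.mp (h ▸ le_of_dvd (Multiset.dvd_prod hps))
  obtain ⟨p', hp's, hp'q⟩ :=
    (ht q hqt).multiset_prod_le.mp (h.symm ▸ le_of_dvd (Multiset.dvd_prod hqt))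
  have hpq : p ≤ q := (hp.le_of_le (Multiset.mem_toFinset.mpr hp's) (hp'q.trans hqp)).trans hp'q
  exact ⟨p, hps, le_antisymm hpq hqp ▸ hqt⟩

theorem Ideal.multiset_eq_of_prod_eq [IsFractionRing R K] {s t : Multiset (Ideal R)}
    (hs : ∀ p ∈ s, p.IsPrime) (ht : ∀ p ∈ t, p.IsPrime)
    (hunit : IsUnit (s.prod : FractionalIdeal R⁰ K)) (h : s.prod = t.prod) : s = t := by
  classical
  induction s using Multiset.strongInductionOn generalizing t with
  | ih s ih =>
  rcases eq_or_ne s 0 with rfl | hs0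
  · by_contra ht0
    obtain ⟨p, -, hp0⟩ := exists_mem_of_multiset_prod_eq ht hs h.symm (Ne.symm ht0)
    exact Multiset.notMem_zero p hp0
  obtain ⟨p, hps, hpt⟩ := exists_mem_of_multiset_prod_eq hs ht h hs0
  rw [← Multiset.cons_erase hps, ← Multiset.cons_erase hpt] at h ⊢
  rw [← Multiset.cons_erase hps, Multiset.prod_cons, coeIdeal_mul] at hunit
  rw [Multiset.prod_cons, Multiset.prod_cons] at h
  congr 1
  exact ih _ (Multiset.erase_lt.mpr hps) (fun q hq ↦ hs q (Multiset.mem_of_mem_erase hq))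
    (fun q hq ↦ ht q (Multiset.mem_of_mem_erase hq)) (isUnit_of_mul_isUnit_right hunit)
    (mul_left_cancel_of_isUnit_coeIdeal (isUnit_of_mul_isUnit_left hunit) h)

theorem Ideal.multiset_eq_of_map_prod_eq {S L : Type*} [CommRing S] [Field L] [Algebra S L]
    [IsFractionRing S L] {f : R →+* S} (hf : Function.Surjective f) {s t : Multiset (Ideal R)}
    (hs : ∀ p ∈ s, p.IsPrime ∧ RingHom.ker f ≤ p) (ht : ∀ p ∈ t, p.IsPrime ∧ RingHom.ker f ≤ p)
    (hunit : IsUnit (s.prod.map f : FractionalIdeal S⁰ L)) (h : s.prod.map f = t.prod.map f) :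
    s = t := by
  have map_prod (u : Multiset (Ideal R)) : u.prod.map f = (u.map (map f)).prod := by
    simpa using map_multiset_prod (mapHom f) u
  have map_isPrime {u : Multiset (Ideal R)} (hu : ∀ p ∈ u, p.IsPrime ∧ RingHom.ker f ≤ p) :
      ∀ q ∈ u.map (map f), q.IsPrime := by
    simp only [Multiset.mem_map, forall_exists_index, and_imp]
    rintro _ p hp rfl
    have := (hu p hp).1
    exact map_isPrime_of_surjective hf (hu p hp).2
  have comap_map {u : Multiset (Ideal R)} (hu : ∀ p ∈ u, p.IsPrime ∧ RingHom.ker f ≤ p) :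
      (u.map (map f)).map (comap f) = u := by
    rw [Multiset.map_map]
    refine (Multiset.map_congr rfl fun p hp ↦ ?_).trans u.map_id
    rw [Function.comp_apply, comap_map_of_surjective' f hf, sup_eq_left.mpr (hu p hp).2, id]
  rw [map_prod, map_prod] at h
  rw [map_prod] at hunit
  rw [← comap_map hs, multiset_eq_of_prod_eq (map_isPrime hs) (map_isPrime ht) hunit h,
    comap_map ht]

def HasPrimeFactorizations (R : Type*) [CommRing R] : Prop :=
  ∀ I : Ideal R, I ≠ ⊥ → I ≠ ⊤ → ∃ s : Multiset (Ideal R), (∀ p ∈ s, p.IsPrime) ∧ s.prod = I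

theorem HasPrimeFactorizations.exists_multiset_prod_eq (hR : HasPrimeFactorizations R)
    {I : Ideal R} (hI : I ≠ ⊥) : ∃ s : Multiset (Ideal R), (∀ p ∈ s, p.IsPrime) ∧ s.prod = I := by
  rcases eq_or_ne I ⊤ with rfl | hI'
  · exact ⟨0, by simp, by simp⟩
  · exact hR I hI hI'

theorem HasPrimeFactorizations.sup_span_singleton_sq_eq_sq (hR : HasPrimeFactorizations R)
    {P : Ideal R} (hP : P.IsPrime) {a : R} (ha : a ∉ P) :
    P ⊔ span {a ^ 2} = (P ⊔ span {a}) ^ 2 := by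
  let f := Ideal.Quotient.mk P
  have map_sup (x : R) : (P ⊔ span {x}).map f = span {f x} := by
    rw [Ideal.map_sup, map_quotient_self, bot_sup_eq, map_span, Set.image_singleton]
  have hfa : f a ≠ 0 := fun h ↦ ha (Ideal.Quotient.eq_zero_iff_mem.mp h)
  have sup_ne_bot {x : R} (hx : x ∉ P) : P ⊔ span {x} ≠ ⊥ := (Submodule.ne_bot_iff _).mpr
    ⟨x, mem_sup_right (mem_span_singleton_self x), fun h ↦ hx (h ▸ P.zero_mem)⟩
  obtain ⟨s, hs, hsA⟩ := hR.exists_multiset_prod_eq (sup_ne_bot ha)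
  obtain ⟨t, ht, htB⟩ := hR.exists_multiset_prod_eq
    (sup_ne_bot fun h ↦ ha (hP.mem_of_pow_mem 2 h))
  have factors_ge {I : Ideal R} {u : Multiset (Ideal R)} (hu : ∀ p ∈ u, p.IsPrime)
      (huI : u.prod = I) (hPI : P ≤ I) : ∀ p ∈ u, p.IsPrime ∧ RingHom.ker f ≤ p := fun p hp ↦
    ⟨hu p hp, mk_ker.trans_le (hPI.trans (huI ▸ le_of_dvd (Multiset.dvd_prod hp)))⟩
  suffices s + s = t by rw [← htB, ← this, Multiset.prod_add, hsA, sq]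
  refine multiset_eq_of_map_prod_eq (L := FractionRing (R ⧸ P)) Ideal.Quotient.mk_surjective ?_
    (factors_ge ht htB le_sup_left) ?_ ?_
  · simpa only [Multiset.mem_add, or_self] using factors_ge hs hsA le_sup_left
  · rw [Multiset.prod_add, hsA, Ideal.map_mul, map_sup, span_singleton_mul_span_singleton]
    exact isUnit_coeIdeal_span_singleton (mul_ne_zero hfa hfa)
  · rw [Multiset.prod_add, hsA, htB, Ideal.map_mul, map_sup, map_sup,
      span_singleton_mul_span_singleton, map_pow, sq]

theorem Ideal.IsPrime.le_mul_sup_span_singleton {P : Ideal R} (hP : P.IsPrime) {a : R}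
    (ha : a ∉ P) (h : P ≤ (P ⊔ span {a}) ^ 2) : P ≤ P * (P ⊔ span {a}) := by
  intro x hx
  rw [sq, sup_mul] at h
  obtain ⟨y, hy, z, hz, rfl⟩ := Submodule.mem_sup.mp (h hx)
  obtain ⟨w, -, rfl⟩ := mem_span_singleton_mul.mp hz
  have hwP : w ∈ P :=
    (hP.mem_or_mem ((P.add_mem_iff_right (mul_le_left hy)).mp hx)).resolve_left ha
  exact add_mem hy (mul_comm w a ▸ mul_mem_mul hwP (mem_sup_right (mem_span_singleton_self a)))

theorem HasPrimeFactorizations.isMaximal_of_isUnit_coeIdeal [IsFractionRing R K]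
    (hR : HasPrimeFactorizations R) {P : Ideal R} (hP : P.IsPrime)
    (hunit : IsUnit (P : FractionalIdeal R⁰ K)) : P.IsMaximal := by
  have sup_eq_top {a : R} (ha : a ∉ P) : P ⊔ span {a} = ⊤ := by
    refine mul_left_cancel_of_isUnit_coeIdeal hunit ?_
    rw [mul_top]
    refine le_antisymm mul_le_left (hP.le_mul_sup_span_singleton ha ?_)
    rw [← hR.sup_span_singleton_sq_eq_sq hP ha]
    exact le_sup_left
  refine ⟨⟨hP.ne_top, fun J hPJ ↦ ?_⟩⟩
  obtain ⟨a, haJ, haP⟩ := SetLike.exists_of_lt hPJ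
  exact top_le_iff.mp (sup_eq_top haP ▸ sup_le hPJ.le ((span_singleton_le_iff_mem J).mpr haJ))

theorem HasPrimeFactorizations.isUnit_coeIdeal_of_isPrime [IsDomain R] [IsFractionRing R K]
    (hR : HasPrimeFactorizations R) {P : Ideal R} (hP : P.IsPrime) (hP0 : P ≠ ⊥) :
    IsUnit (P : FractionalIdeal R⁰ K) := by
  classical
  obtain ⟨a, haP, ha0⟩ := (Submodule.ne_bot_iff P).mp hP0
  obtain ⟨s, hs, hsa⟩ := hR.exists_multiset_prod_eq (I := span {a}) (by simpa using ha0)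
  obtain ⟨p, hps, hpP⟩ := hP.multiset_prod_le.mp (hsa ▸ (span_singleton_le_iff_mem P).mpr haP)
  have hp : IsUnit (p : FractionalIdeal R⁰ K) := by
    refine isUnit_coeIdeal_of_mul_left (J := (s.erase p).prod) ?_
    rw [← Multiset.prod_cons, Multiset.cons_erase hps, hsa]
    exact isUnit_coeIdeal_span_singleton ha0
  rwa [← (hR.isMaximal_of_isUnit_coeIdeal (hs p hps) hp).eq_of_le hP.ne_top hpP]

theorem HasPrimeFactorizations.isUnit_coeIdeal [IsDomain R] [IsFractionRing R K]
    (hR : HasPrimeFactorizations R) {I : Ideal R} (hI : I ≠ ⊥) :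
    IsUnit (I : FractionalIdeal R⁰ K) := by
  obtain ⟨s, hs, rfl⟩ := hR.exists_multiset_prod_eq hI
  refine isUnit_coeIdeal_multiset_prod fun p hp ↦ hR.isUnit_coeIdeal_of_isPrime (hs p hp) ?_
  rintro rfl
  exact hI (Multiset.prod_eq_zero hp)

end

theorem isDedekindDomain_of_forall_isUnit_coeIdeal {R : Type*} [CommRing R] [IsDomain R]
    (K : Type*) [Field K] [Algebra R K] [IsFractionRing R K]
    (h : ∀ I : Ideal R, I ≠ ⊥ → IsUnit (I : FractionalIdeal R⁰ K)) : IsDedekindDomain R := by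
  refine (isDedekindDomain_iff_mul_inv_cancel (K := K)).mpr fun I hI ↦ ?_
  rw [mul_inv_cancel_iff_isUnit]
  have hnum : IsUnit (I.num : FractionalIdeal R⁰ K) := h _ fun h0 ↦ hI (num_eq_zero_iff.mp h0)
  exact isUnit_of_mul_isUnit_right (den_mul_self_eq_num' R⁰ K I ▸ hnum)

/-- If every nonzero proper ideal of an integral domain R is a product of prime ideals,
then R is a Dedekind domain. -/
theorem stmt18 (R : Type*) [CommRing R] [IsDomain R]
    (h : ∀ I : Ideal R, I ≠ ⊥ → I ≠ ⊤ →
      ∃ s : Multiset (Ideal R), (∀ p ∈ s, p.IsPrime) ∧ s.prod = I) :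
    IsDedekindDomain R :=
  isDedekindDomain_of_forall_isUnit_coeIdeal (FractionRing R) fun _ ↦
    HasPrimeFactorizations.isUnit_coeIdeal h
end

section
/- An integral domain R is a cancellation domain (for all nonzero ideals I₁, I₂, J of R, I₁ · J = I₂ · J implies I₁ = I₂) if and only if R is an almost Dedekind domain, i.e., for every nonzero maximal ideal 𝔪 of R the localization of R at 𝔪 is a discrete valuation ring. -/
/-!
If nonzero ideals cancel, then for nonzero `a, b` cancelling `(a, b)` from
`(a, b)² (a, b) = (a², b²) (a, b)` gives `ab = ra² + sb²`, and two more cancellations give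
`a ∣ b e` and `b ∣ a f` with `e + f = 1`; one of `e, f` is a unit at any prime, so every
localization of `R` at a prime is a valuation ring. At a nonzero maximal ideal `M`, an ideal
`Q` of `R_M` with `M Q = Q` must vanish, since otherwise its contraction `Q'` satisfies
`M Q' = Q'` (check locally) and cancelling `Q'` gives `M = R`. Hence the maximal ideal of
`R_M` is not idempotent, so it is principal, and the intersection of its powers vanishes,
which makes `R_M` a DVR. Conversely, equality of ideals is a local property and nonzero ideals
of a DVR cancel.
-/

open Ideal IsLocalRing

def IsCancellationDomain (R : Type*) [CommRing R] : Prop :=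
  ∀ I₁ I₂ J : Ideal R, I₁ ≠ ⊥ → I₂ ≠ ⊥ → J ≠ ⊥ → I₁ * J = I₂ * J → I₁ = I₂

section IdealArithmetic

variable {R : Type*} [CommRing R]

theorem Ideal.span_pair_pow_two_mul_span_pair (a b : R) :
    span {a, b} ^ 2 * span {a, b} = span {a ^ 2, b ^ 2} * span {a, b} := by
  simp only [span_insert, ← span_singleton_pow]
  set A : Ideal R := span {a}
  set B : Ideal R := span {b}
  have h3 : (3 : Ideal R) = 1 := by
    rw [show (3 : Ideal R) = 1 + 1 + 1 by norm_num, add_idem, add_idem]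
  change (A + B) ^ 2 * (A + B) = (A ^ 2 + B ^ 2) * (A + B)
  calc (A + B) ^ 2 * (A + B) = A ^ 3 + B ^ 3 + 3 * (A ^ 2 * B + A * B ^ 2) := by ring
    _ = A ^ 3 + B ^ 3 + (A ^ 2 * B + A * B ^ 2) := by rw [h3, one_mul]
    _ = (A ^ 2 + B ^ 2) * (A + B) := by ring

theorem Ideal.span_pair_mul_self_eq_of_pow_two_mem {x y : R}
    (h : x ^ 2 ∈ span {y} * span {y, x}) :
    span {y, x} * span {y, x} = span {y} * span {y, x} := by
  rw [span_insert]
  set X : Ideal R := span {x}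
  set Y : Ideal R := span {y}
  have hX : X ^ 2 ≤ Y * (Y ⊔ X) := by
    rwa [span_singleton_pow, span_le, Set.singleton_subset_iff, ← span_insert]
  have hXY : X * Y ≤ Y * (Y ⊔ X) := by
    rw [mul_comm]
    exact mul_mono_right le_sup_right
  calc (Y ⊔ X) * (Y ⊔ X) = Y * (Y ⊔ X) ⊔ (X * Y ⊔ X ^ 2) := by
        simp only [← Submodule.add_eq_sup]; ring
    _ = Y * (Y ⊔ X) := sup_eq_left.mpr (sup_le hXY hX)

theorem Ideal.span_singleton_mul_iInf_span_pow [IsDomain R] {ϖ : R} (hϖ : ϖ ≠ 0) :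
    span {ϖ} * ⨅ n : ℕ, span {ϖ ^ n} = ⨅ n : ℕ, span {ϖ ^ n} := by
  refine le_antisymm mul_le_right fun z hz ↦ ?_
  simp only [mem_iInf, mem_span_singleton] at hz
  obtain ⟨w, rfl⟩ := pow_one ϖ ▸ hz 1
  refine mul_mem_mul (mem_span_singleton_self ϖ) (mem_iInf.mpr fun n ↦ ?_)
  exact mem_span_singleton.mpr ((mul_dvd_mul_iff_left hϖ).mp (pow_succ' ϖ n ▸ hz (n + 1)))

end IdealArithmetic

theorem IsLocalization.exists_associated_algebraMap {R S : Type*} [CommRing R] [CommRing S]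
    [Algebra R S] (M : Submonoid R) [IsLocalization M S] (x : S) :
    ∃ a : R, Associated x (algebraMap R S a) := by
  obtain ⟨⟨a, s⟩, h⟩ := IsLocalization.surj M x
  exact ⟨a, (IsLocalization.map_units S s).unit, h⟩

namespace ValuationRing

variable {L : Type*} [CommRing L] [IsDomain L] [ValuationRing L]

theorem maximalIdeal_eq_span_of_not_mem_pow_two {ϖ : L} (hϖ : ϖ ∈ maximalIdeal L)
    (hϖ2 : ϖ ∉ maximalIdeal L ^ 2) : maximalIdeal L = span {ϖ} := by
  refine le_antisymm (fun y hy ↦ ?_) (span_le.mpr (by simpa using hϖ))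
  rcases dvd_total ϖ y with h | ⟨c, rfl⟩
  · exact mem_span_singleton.mpr h
  by_cases hc : IsUnit c
  · exact mem_span_singleton.mpr ⟨↑hc.unit⁻¹, by rw [mul_assoc, IsUnit.mul_val_inv, mul_one]⟩
  · exact absurd (pow_two (maximalIdeal L) ▸ mul_mem_mul hy ((mem_maximalIdeal c).mpr hc)) hϖ2

theorem isDiscreteValuationRing_of_forall_maximalIdeal_mul_eq (hne : maximalIdeal L ≠ ⊥)
    (h : ∀ Q : Ideal L, maximalIdeal L * Q = Q → Q = ⊥) : IsDiscreteValuationRing L := by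
  have hsq : maximalIdeal L ^ 2 ≠ maximalIdeal L := fun h2 ↦ hne (h _ (by rwa [← pow_two]))
  obtain ⟨ϖ, hϖ, hϖ2⟩ := SetLike.exists_of_lt (lt_of_le_of_ne (pow_le_self two_ne_zero) hsq)
  have hspan := maximalIdeal_eq_span_of_not_mem_pow_two hϖ hϖ2
  have hϖ0 : ϖ ≠ 0 := by
    rintro rfl
    simp [hspan] at hne
  refine .ofHasUnitMulPowIrreducibleFactorization
    ⟨ϖ, IsDiscreteValuationRing.irreducible_of_span_eq_maximalIdeal ϖ hϖ0 hspan, fun {x} hx ↦ ?_⟩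
  have hfin : FiniteMultiplicity ϖ x := by
    by_contra hinf
    have hx' : x ∈ ⨅ n : ℕ, span {ϖ ^ n} :=
      mem_iInf.mpr fun n ↦ mem_span_singleton.mpr (FiniteMultiplicity.not_iff_forall.mp hinf n)
    rw [h (⨅ n : ℕ, span {ϖ ^ n}) (hspan ▸ span_singleton_mul_iInf_span_pow hϖ0),
      mem_bot] at hx'
    exact hx hx'
  obtain ⟨c, hxc, hc⟩ := hfin.exists_eq_pow_mul_and_not_dvd
  have hcu : IsUnit c := by
    by_contra hcu
    exact hc (mem_span_singleton.mp (hspan ▸ (mem_maximalIdeal c).mpr hcu))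
  exact ⟨_, hcu.unit, hxc.symm⟩

end ValuationRing

namespace IsCancellationDomain

variable {R : Type*} [CommRing R]

theorem dvd_of_pow_two_mem (hR : IsCancellationDomain R) {x y : R} (hy : y ≠ 0)
    (h : x ^ 2 ∈ span {y} * span {y, x}) : y ∣ x := by
  have hne : span {y, x} ≠ ⊥ := by simp [hy]
  have := hR _ _ _ hne (by simp [hy]) hne (span_pair_mul_self_eq_of_pow_two_mem h)
  exact mem_span_singleton.mp (this ▸ subset_span (by simp))

variable [IsDomain R]

theorem mul_mem_span_pow_two (hR : IsCancellationDomain R) {a : R} (ha : a ≠ 0) (b : R) :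
    a * b ∈ span {a ^ 2, b ^ 2} := by
  have hsq : span {a, b} ^ 2 = span {a ^ 2, b ^ 2} :=
    hR _ _ _ (pow_ne_zero 2 (by simp [ha])) (by simp [ha]) (by simp [ha])
      (span_pair_pow_two_mul_span_pair a b)
  rw [← hsq, pow_two]
  exact mul_mem_mul (subset_span (by simp)) (subset_span (by simp))

theorem exists_add_eq_one_dvd (hR : IsCancellationDomain R) {a b : R} (ha : a ≠ 0)
    (hb : b ≠ 0) : ∃ e f : R, e + f = 1 ∧ a ∣ b * e ∧ b ∣ a * f := by
  obtain ⟨r, s, hrs⟩ := mem_span_pair.mp (hR.mul_mem_span_pow_two ha b)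
  have hra : b ∣ r * a := hR.dvd_of_pow_two_mem hb <| mem_span_singleton_mul.mpr
    ⟨-(r * s) * b + 1 * (r * a), mem_span_pair.mpr ⟨_, _, rfl⟩, by linear_combination -r * hrs⟩
  have hsb : a ∣ s * b := hR.dvd_of_pow_two_mem ha <| mem_span_singleton_mul.mpr
    ⟨-(r * s) * a + 1 * (s * b), mem_span_pair.mpr ⟨_, _, rfl⟩, by linear_combination -s * hrs⟩
  obtain ⟨e, he⟩ := hra
  obtain ⟨f, hf⟩ := hsb
  refine ⟨e, f, mul_left_cancel₀ (mul_ne_zero ha hb) ?_, ⟨r, by rw [← he, mul_comm]⟩,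
    ⟨s, by rw [← hf, mul_comm]⟩⟩
  linear_combination -a * he - b * hf + hrs

theorem valuationRing_localization (hR : IsCancellationDomain R) (P : Ideal R) [P.IsPrime] :
    ValuationRing (Localization.AtPrime P) := by
  set L := Localization.AtPrime P
  suffices h : ∀ a b : R,
      algebraMap R L a ∣ algebraMap R L b ∨ algebraMap R L b ∣ algebraMap R L a by
    refine ValuationRing.iff_dvd_total.mpr ⟨fun x y ↦ ?_⟩
    obtain ⟨a, hxa⟩ := IsLocalization.exists_associated_algebraMap P.primeCompl x
    obtain ⟨b, hyb⟩ := IsLocalization.exists_associated_algebraMap P.primeCompl y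
    simpa only [hxa.dvd_iff_dvd_left, hxa.dvd_iff_dvd_right, hyb.dvd_iff_dvd_left,
      hyb.dvd_iff_dvd_right] using h a b
  intro a b
  rcases eq_or_ne a 0 with rfl | ha
  · simp
  rcases eq_or_ne b 0 with rfl | hb
  · simp
  obtain ⟨e, f, hef, hae, hbf⟩ := hR.exists_add_eq_one_dvd ha hb
  have hunit {c : R} (hc : c ∉ P) : IsUnit (algebraMap R L c) :=
    (IsLocalization.AtPrime.isUnit_to_map_iff L P c).mpr hc
  have : e ∉ P ∨ f ∉ P := by
    by_contra! h
    exact IsPrime.ne_top ‹_› ((P.eq_top_iff_one).mpr (hef ▸ P.add_mem h.1 h.2))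
  rcases this with he | hf
  · left
    exact (hunit he).dvd_mul_right.mp (by simpa using map_dvd (algebraMap R L) hae)
  · right
    exact (hunit hf).dvd_mul_right.mp (by simpa using map_dvd (algebraMap R L) hbf)

theorem eq_bot_of_maximalIdeal_mul_eq (hR : IsCancellationDomain R) {M : Ideal R} [M.IsMaximal]
    (hM : M ≠ ⊥) {Q : Ideal (Localization.AtPrime M)}
    (hQ : maximalIdeal (Localization.AtPrime M) * Q = Q) : Q = ⊥ := by
  set Q' := Q.comap (algebraMap R (Localization.AtPrime M))
  have hQ' : Q'.map (algebraMap R (Localization.AtPrime M)) = Q :=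
    IsLocalization.map_under M.primeCompl _ Q
  rcases eq_or_ne Q' ⊥ with h0 | h0
  · rw [← hQ', h0, Ideal.map_bot]
  have hMQ : M * Q' = Q' := by
    refine eq_of_localization_maximal fun P hP ↦ ?_
    rw [Ideal.map_mul]
    by_cases hMP : M ≤ P
    · obtain rfl := IsMaximal.eq_of_le ‹_› hP.ne_top hMP
      rw [Localization.AtPrime.map_eq_maximalIdeal, hQ', hQ]
    · rw [IsLocalization.AtPrime.map_eq_top_of_not_le _ hMP, top_mul]
  exact absurd (hR M ⊤ Q' hM (by simp) h0 (by rw [top_mul, hMQ])) (IsMaximal.ne_top ‹_›)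

theorem isDiscreteValuationRing_localization (hR : IsCancellationDomain R) {M : Ideal R}
    [M.IsMaximal] (hM : M ≠ ⊥) : IsDiscreteValuationRing (Localization.AtPrime M) := by
  have := hR.valuationRing_localization M
  refine ValuationRing.isDiscreteValuationRing_of_forall_maximalIdeal_mul_eq ?_
    fun _ ↦ hR.eq_bot_of_maximalIdeal_mul_eq hM
  rw [← Localization.AtPrime.map_eq_maximalIdeal]
  exact map_ne_bot_of_ne_bot hM

theorem of_isDiscreteValuationRing_localization
    (h : ∀ (m : Ideal R) (hm : m.IsMaximal), m ≠ ⊥ →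
      IsDiscreteValuationRing (@Localization.AtPrime R _ m hm.isPrime)) :
    IsCancellationDomain R := by
  intro I₁ I₂ J h₁ h₂ hJ hIJ
  refine eq_of_localization_maximal fun P hP ↦ ?_
  rcases eq_or_ne P ⊥ with rfl | hP0
  · -- `⊥` is a coatom, so every nonzero ideal is `⊤`
    rw [hP.1.2 I₁ (bot_lt_iff_ne_bot.mpr h₁), hP.1.2 I₂ (bot_lt_iff_ne_bot.mpr h₂)]
  have := h P hP hP0
  exact mul_right_cancel₀ (map_ne_bot_of_ne_bot hJ) (by simp only [← Ideal.map_mul, hIJ])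

end IsCancellationDomain

/-- An integral domain R is a cancellation domain (I₁ * J = I₂ * J implies I₁ = I₂ for
all nonzero ideals I₁, I₂, J) iff R is an almost Dedekind domain (for every nonzero
maximal ideal 𝔪 the localization of R at 𝔪 is a discrete valuation ring). -/
theorem stmt19 (R : Type*) [CommRing R] [IsDomain R] :
    (∀ I₁ I₂ J : Ideal R, I₁ ≠ ⊥ → I₂ ≠ ⊥ → J ≠ ⊥ → I₁ * J = I₂ * J → I₁ = I₂) ↔
      (∀ (m : Ideal R) (hm : m.IsMaximal), m ≠ ⊥ →
        IsDiscreteValuationRing (@Localization.AtPrime R _ m hm.isPrime)) :=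
  ⟨fun hR _ _ hm0 ↦ IsCancellationDomain.isDiscreteValuationRing_localization hR hm0,
    IsCancellationDomain.of_isDiscreteValuationRing_localization⟩
end
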